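/- arXiv:1702.08670 — 3 statements merged into one kernel-verified Lean document; each statement's English description precedes it below -/
import Mathlib

section
/- Entrywise gradient formula, boundedness, and Lipschitz bound for the single-layer sigmoid loss: For x ∈ [0,1]^{d_x}, y ∈ [0,1]^{d_y}, W ∈ ℝ^{d_y×d_x} and indices i ∈ {1,…,d_y}, j ∈ {1,…,d_x}: (a) ∂L/∂W_{ij}(x,y;W) = −2 ( y_i − σ((Wx)_i) ) σ((Wx)_i) (1 − σ((Wx)_i)) x_j, and |∂L/∂W_{ij}(x,y;W)| ≤ 1/2; (b) if Ŵ ∈ ℝ^{d_y×d_x} differs from W only in the (i,j) entry, then |∂L/∂W_{ij}(x,y;W) − ∂L/∂W_{ij}(x,y;Ŵ)| ≤ (13/8) |W_{ij} − Ŵ_{ij}|. -/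
/-- The logistic sigmoid `σ(t) = 1/(1+exp(−t))`. -/
noncomputable def sigmoid (t : ℝ) : ℝ := 1 / (1 + Real.exp (-t))

/-- Entrywise (partial-derivative) gradient of `f : (ι → ℝ) → ℝ` at `W`. -/
noncomputable def pgrad {ι : Type*} [DecidableEq ι]
    (f : (ι → ℝ) → ℝ) (W : ι → ℝ) : ι → ℝ :=
  fun p => deriv (fun t => f (Function.update W p t)) (W p)

/-- Single-layer loss `L(x,y;W) = ‖y − σ(Wx)‖²`. -/
noncomputable def sLoss {dx dy : ℕ} (x : Fin dx → ℝ) (y : Fin dy → ℝ)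
    (W : Fin dy × Fin dx → ℝ) : ℝ :=
  ∑ i, (y i - sigmoid (∑ j, W (i, j) * x j)) ^ 2

lemma one_add_exp_pos (t : ℝ) : 0 < 1 + Real.exp (-t) := by positivity

lemma sigmoid_pos (t : ℝ) : 0 < sigmoid t := by unfold sigmoid; positivity

lemma sigmoid_lt_one (t : ℝ) : sigmoid t < 1 := by
  unfold sigmoid
  rw [div_lt_one (one_add_exp_pos t)]
  linarith [Real.exp_pos (-t)]

lemma sigmoid_mul_le (t : ℝ) : sigmoid t * (1 - sigmoid t) ≤ 1/4 := by
  nlinarith [sq_nonneg (sigmoid t - 1/2)]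

lemma sigmoid_mul_nonneg (t : ℝ) : 0 ≤ sigmoid t * (1 - sigmoid t) := by
  have := sigmoid_pos t; have := sigmoid_lt_one t; nlinarith

lemma hasDerivAt_sigmoid (t : ℝ) :
    HasDerivAt sigmoid (sigmoid t * (1 - sigmoid t)) t := by
  have h1 : HasDerivAt (fun s : ℝ => 1 + Real.exp (-s)) (-Real.exp (-t)) t := by
    have := ((Real.hasDerivAt_exp (-t)).comp t (hasDerivAt_neg t)).const_add 1
    simpa using this
  have h2 := h1.inv (ne_of_gt (one_add_exp_pos t))
  have hfun : sigmoid = fun s : ℝ => (1 + Real.exp (-s))⁻¹ := by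
    funext s; simp [sigmoid, one_div]
  rw [hfun]
  refine h2.congr_deriv ?_
  have hne := (one_add_exp_pos t).ne'
  field_simp
  ring

/-- **Entrywise gradient formula, boundedness, and Lipschitz bound for the
single-layer sigmoid loss.**
(a) `∂L/∂W_{ij} = −2 (y_i − σ((Wx)_i)) σ((Wx)_i)(1 − σ((Wx)_i)) x_j` and
`|∂L/∂W_{ij}| ≤ 1/2`;
(b) if `Ŵ` differs from `W` only in the `(i,j)` entry, then
`|∂L/∂W_{ij}(W) − ∂L/∂W_{ij}(Ŵ)| ≤ (13/8)|W_{ij} − Ŵ_{ij}|`. -/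
theorem single_layer_loss_gradient_entrywise
    (dx dy : ℕ)
    (x : Fin dx → ℝ) (y : Fin dy → ℝ)
    (hx : ∀ j, x j ∈ Set.Icc (0:ℝ) 1) (hy : ∀ i, y i ∈ Set.Icc (0:ℝ) 1)
    (W Wh : Fin dy × Fin dx → ℝ) (i : Fin dy) (j : Fin dx)
    (hWh : ∀ p : Fin dy × Fin dx, p ≠ (i, j) → Wh p = W p) :
    pgrad (sLoss x y) W (i, j) =
        -2 * (y i - sigmoid (∑ j', W (i, j') * x j')) *
          (sigmoid (∑ j', W (i, j') * x j') * (1 - sigmoid (∑ j', W (i, j') * x j'))) * x j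
    ∧ |pgrad (sLoss x y) W (i, j)| ≤ 1 / 2
    ∧ |pgrad (sLoss x y) W (i, j) - pgrad (sLoss x y) Wh (i, j)| ≤
        (13 / 8) * |W (i, j) - Wh (i, j)| := by
  classical
  set A : ℝ := ∑ j' ∈ Finset.univ.erase j, W (i, j') * x j' with hA
  set g : ℝ → ℝ := fun w =>
    -2 * (y i - sigmoid (A + w * x j)) *
      (sigmoid (A + w * x j) * (1 - sigmoid (A + w * x j))) * x j with hg
  have hxj0 := (hx j).1
  have hxj1 := (hx j).2
  have hy0 := (hy i).1
  have hy1 := (hy i).2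
  -- derivative of inner affine map at any point
  have hsder : ∀ w : ℝ, HasDerivAt (fun t : ℝ => A + t * x j) (x j) w := by
    intro w
    have := ((hasDerivAt_id w).mul_const (x j)).const_add A
    simpa using this
  have hσder : ∀ w : ℝ, HasDerivAt (fun t : ℝ => sigmoid (A + t * x j))
      (sigmoid (A + w * x j) * (1 - sigmoid (A + w * x j)) * x j) w := by
    intro w
    have := (hasDerivAt_sigmoid (A + w * x j)).comp w (hsder w); exact this
  -- key: pgrad at any V agreeing with W off (i,j)
  have key : ∀ V : Fin dy × Fin dx → ℝ, (∀ p ≠ ((i : Fin dy), (j : Fin dx)), V p = W p) →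
      pgrad (sLoss x y) V (i, j) = g (V (i, j)) := by
    intro V hV
    have hsum : ∀ t : ℝ, ∑ j', Function.update V (i, j) t (i, j') * x j' = A + t * x j := by
      intro t
      rw [← Finset.sum_erase_add _ _ (Finset.mem_univ j)]
      congr 1
      · apply Finset.sum_congr rfl
        intro j' hj'
        have hne : ((i, j') : Fin dy × Fin dx) ≠ (i, j) := by
          intro h
          exact (Finset.mem_erase.mp hj').1 (congrArg Prod.snd h)
        rw [Function.update_of_ne hne, hV _ hne]
      · simp
    have hL : (fun t => sLoss x y (Function.update V (i, j) t)) =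
        fun t => (∑ i' ∈ Finset.univ.erase i,
            (y i' - sigmoid (∑ j', V (i', j') * x j')) ^ 2)
          + (y i - sigmoid (A + t * x j)) ^ 2 := by
      funext t
      unfold sLoss
      rw [← Finset.sum_erase_add _ _ (Finset.mem_univ i)]
      congr 1
      · apply Finset.sum_congr rfl
        intro i' hi'
        congr 3
        apply Finset.sum_congr rfl
        intro j' _
        have hne : ((i', j') : Fin dy × Fin dx) ≠ (i, j) := by
          intro h
          exact (Finset.mem_erase.mp hi').1 (congrArg Prod.fst h)
        rw [Function.update_of_ne hne]
      · rw [hsum]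
    have hupd : Function.update V (i, j) (V (i, j)) = V := Function.update_eq_self _ _
    have hder : HasDerivAt (fun t => sLoss x y (Function.update V (i, j) t))
        (g (V (i, j))) (V (i, j)) := by
      rw [hL]
      set t0 := V (i, j)
      have h2 : HasDerivAt (fun t : ℝ => (y i - sigmoid (A + t * x j)) ^ 2)
          (2 * (y i - sigmoid (A + t0 * x j)) ^ 1 *
            (0 - sigmoid (A + t0 * x j) * (1 - sigmoid (A + t0 * x j)) * x j)) t0 :=
        ((hasDerivAt_const t0 (y i)).sub (hσder t0)).pow 2
      have h3 := h2.const_add (∑ i' ∈ Finset.univ.erase i,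
            (y i' - sigmoid (∑ j', V (i', j') * x j')) ^ 2)
      refine h3.congr_deriv ?_
      simp only [hg]
      ring
    unfold pgrad
    exact hder.deriv
  -- bound on |g w|
  have hgb : ∀ w : ℝ, |g w| ≤ 1/2 := by
    intro w
    set s := sigmoid (A + w * x j) with hs
    have hs0 := sigmoid_pos (A + w * x j)
    have hs1 := sigmoid_lt_one (A + w * x j)
    have hb := sigmoid_mul_le (A + w * x j)
    have hbn := sigmoid_mul_nonneg (A + w * x j)
    have h1 : |y i - s| ≤ 1 := abs_le.mpr ⟨by simp only [← hs] at *; linarith,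
      by simp only [← hs] at *; linarith⟩
    have h2 : |s * (1 - s)| ≤ 1/4 := abs_le.mpr ⟨by simp only [← hs] at *; linarith,
      by simp only [← hs] at *; linarith⟩
    have h3 : |x j| ≤ 1 := abs_le.mpr ⟨by linarith, hxj1⟩
    have : |g w| = 2 * |y i - s| * |s * (1 - s)| * |x j| := by
      simp only [hg, ← hs, abs_mul]
      norm_num
    rw [this]
    have k2 : 2 * |y i - s| * |s * (1 - s)| ≤ 2 * (1/4) :=
      mul_le_mul (by linarith) h2 (abs_nonneg _) (by norm_num)
    have k3 : 2 * |y i - s| * |s * (1 - s)| * |x j| ≤ (1/2) * 1 :=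
      mul_le_mul (by linarith) h3 (abs_nonneg _) (by norm_num)
    linarith
  -- derivative of g and its bound
  set G : ℝ → ℝ := fun w =>
    2 * (sigmoid (A + w * x j) * (1 - sigmoid (A + w * x j))) * (x j) ^ 2 *
      ((sigmoid (A + w * x j) * (1 - sigmoid (A + w * x j))) -
        (y i - sigmoid (A + w * x j)) * (1 - 2 * sigmoid (A + w * x j))) with hG
  have hGder : ∀ w : ℝ, HasDerivAt g (G w) w := by
    intro w
    set s := sigmoid (A + w * x j) with hs
    set d := s * (1 - s) * x j with hd
    have h1 : HasDerivAt (fun t : ℝ => -2 * (y i - sigmoid (A + t * x j)))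
        (-2 * (0 - d)) w :=
      ((hasDerivAt_const w (y i)).sub (hσder w)).const_mul (-2)
    have h2 : HasDerivAt (fun t : ℝ => sigmoid (A + t * x j) * (1 - sigmoid (A + t * x j)))
        (d * (1 - s) + s * (0 - d)) w :=
      (hσder w).mul ((hasDerivAt_const w 1).sub (hσder w))
    have h3 := (h1.mul h2).mul_const (x j)
    refine h3.congr_deriv ?_
    simp only [hG, hd, ← hs]
    ring
  have hGb : ∀ w : ℝ, ‖G w‖ ≤ 13/8 := by
    intro w
    set s := sigmoid (A + w * x j) with hs
    have hs0 := sigmoid_pos (A + w * x j)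
    have hs1 := sigmoid_lt_one (A + w * x j)
    have hb := sigmoid_mul_le (A + w * x j)
    have hbn := sigmoid_mul_nonneg (A + w * x j)
    rw [Real.norm_eq_abs]
    simp only [← hs] at hs0 hs1 hb hbn
    have hP : |(y i - s) * (1 - 2*s)| ≤ 1 := by
      rw [abs_mul]
      have h5 : |y i - s| ≤ 1 := abs_le.mpr ⟨by linarith, by linarith⟩
      have h6 : |1 - 2*s| ≤ 1 := abs_le.mpr ⟨by linarith, by linarith⟩
      calc |y i - s| * |1 - 2*s| ≤ 1 * 1 :=
            mul_le_mul h5 h6 (abs_nonneg _) (by norm_num)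
        _ = 1 := by norm_num
    obtain ⟨hP1, hP2⟩ := abs_le.mp hP
    have hc2 : (0:ℝ) ≤ (x j)^2 := sq_nonneg _
    have hc2' : (x j)^2 ≤ 1 := by nlinarith
    have hq0 : (0:ℝ) ≤ 2 * (s * (1 - s)) * (x j)^2 := by positivity
    have hq1 : 2 * (s * (1 - s)) * (x j)^2 ≤ 1/2 := by nlinarith
    have hT1 : s * (1 - s) - (y i - s) * (1 - 2*s) ≤ 3/2 := by linarith
    have hT2 : -1 ≤ s * (1 - s) - (y i - s) * (1 - 2*s) := by linarith
    have m1 := mul_nonneg hq0 (by linarith : (0:ℝ) ≤ s * (1 - s) - (y i - s) * (1 - 2*s) + 1)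
    have m2 := mul_nonneg hq0 (by linarith : (0:ℝ) ≤ 3/2 - (s * (1 - s) - (y i - s) * (1 - 2*s)))
    rw [abs_le]
    constructor <;> · simp only [hG, ← hs] at *; nlinarith
  have hlip : ∀ a b : ℝ, |g a - g b| ≤ 13/8 * |a - b| := by
    intro a b
    have := (convex_univ : Convex ℝ (Set.univ : Set ℝ)).norm_image_sub_le_of_norm_hasDerivWithin_le
      (fun w _ => (hGder w).hasDerivWithinAt) (fun w _ => hGb w)
      (Set.mem_univ b) (Set.mem_univ a)
    simpa [Real.norm_eq_abs] using this
  -- assemble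
  have hW : pgrad (sLoss x y) W (i, j) = g (W (i, j)) := key W (fun _ _ => rfl)
  have hWh' : pgrad (sLoss x y) Wh (i, j) = g (Wh (i, j)) := key Wh hWh
  have hAs : A + W (i, j) * x j = ∑ j', W (i, j') * x j' :=
    Finset.sum_erase_add _ _ (Finset.mem_univ j)
  refine ⟨?_, ?_, ?_⟩
  · rw [hW]; simp only [hg, hAs]
  · rw [hW]; exact hgb _
  · rw [hW, hWh']; exact hlip _ _
end

section
/- Taller versus shorter pretrained networks (Corollary 14): Fix d_0, d_L, γ, w, α, N, B > 0 with L_s, L_t integers, L_s ≥ 3, and δ_st > 0. Let the shorter network have constant hidden-layer width d_s > 0 and the taller one width d_t = d_s/(1+δ_st). Define Bound(L, d) = d_L/N + (1/B) [ 13 d d_L γ²/256 + (α γ w/4) ( d² d_L + d² d_0 + (L−3) d³ ) ]. Set e^m_1 = (γw/4) d_0 d_s², e^m_2 = (γw/4) d_s³, e^m_{L−1} = (γw/4) d_s² d_L, e^m_L = 13 d_s d_L γ²/256, and Δ = δ_st (1+δ_st)² ( (e^m_1 + e^m_{L−1})/e^m_2 + e^m_L/(α e^m_2) ). If L_s < L_t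 and L_t ≤ L_s + 3 δ_st (L_s − 3) + Δ, then Bound(L_t, d_t) ≤ Bound(L_s, d_s); i.e., the taller network achieves an expected-gradient decay bound no worse than the shorter one. -/
/-! Shrinking the width by `k = 1 + δ` divides the first/last-layer and output-layer terms of
the bound (linear and quadratic in the width) by at least `k`, and each middle-layer term (cubic
in the width) by `k³`. Since `1 + 3δ ≤ k³` (Bernoulli), the `3δ(L_s − 3)` extra middle layers are
paid for by the cubic saving, and `Δ` is exactly the number of further middle layers, each of
cost `(αγw/4)(d_s/k)³`, that the saving `δ/k` of the remaining terms pays for. -/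

theorem add_sq_add_cube_div_one_add_le (a b c δ L L' d : ℝ) (hb : 0 ≤ b) (hc : 0 < c)
    (hδ : 0 ≤ δ) (hL : 0 ≤ L) (hd : 0 < d)
    (hL' : L' ≤ (1 + 3 * δ) * L + δ * (1 + δ) ^ 2 * (a * d + b * d ^ 2) / (c * d ^ 3)) :
    a * (d / (1 + δ)) + b * (d / (1 + δ)) ^ 2 + c * L' * (d / (1 + δ)) ^ 3
      ≤ a * d + b * d ^ 2 + c * L * d ^ 3 := by
  generalize hk : 1 + δ = k at hL' ⊢
  have hk1 : 1 ≤ k := by linarith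
  have hk0 : 0 < k := by linarith
  generalize hE : a * d + b * d ^ 2 = E at hL' ⊢
  have bernoulli : (1 + 3 * δ) * (d / k) ^ 3 ≤ d ^ 3 := by
    calc (1 + 3 * δ) * (d / k) ^ 3 ≤ k ^ 3 * (d / k) ^ 3 := by
          gcongr
          simpa [hk] using one_add_mul_le_pow (show (-2 : ℝ) ≤ δ by linarith) 3
      _ = d ^ 3 := by field_simp
  have outer : a * (d / k) + b * (d / k) ^ 2 ≤ E / k := by
    have hquad : b * d ^ 2 / k ^ 2 ≤ b * d ^ 2 / k :=
      div_le_div_of_nonneg_left (by positivity) hk0 (le_self_pow₀ hk1 two_ne_zero)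
    calc a * (d / k) + b * (d / k) ^ 2 = a * d / k + b * d ^ 2 / k ^ 2 := by ring
      _ ≤ a * d / k + b * d ^ 2 / k := by gcongr
      _ = E / k := by rw [← hE, add_div]
  have excess : c * (δ * k ^ 2 * E / (c * d ^ 3)) * (d / k) ^ 3 = δ * E / k := by
    field_simp
  calc a * (d / k) + b * (d / k) ^ 2 + c * L' * (d / k) ^ 3
      ≤ a * (d / k) + b * (d / k) ^ 2
          + c * ((1 + 3 * δ) * L + δ * k ^ 2 * E / (c * d ^ 3)) * (d / k) ^ 3 := by gcongr
    _ = a * (d / k) + b * (d / k) ^ 2 + δ * E / k + c * L * ((1 + 3 * δ) * (d / k) ^ 3) := by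
          rw [← excess]; ring
    _ ≤ E / k + δ * E / k + c * L * d ^ 3 := by gcongr
    _ = E + c * L * d ^ 3 := by rw [← hk]; field_simp

theorem taller_vs_shorter_pretrained_general
    (d0 dL γ w α N B : ℝ)
    (hd0 : 0 < d0) (hdL : 0 < dL) (hγ : 0 < γ) (hw : 0 < w) (hα : 0 < α)
    (hB : 0 < B)
    (Ls Lt : ℕ) (hLs : 3 ≤ Ls)
    (δst : ℝ) (hδst : 0 < δst)
    (ds dt : ℝ) (hds : 0 < ds) (hdt : dt = ds / (1 + δst))
    (Bound : ℕ → ℝ → ℝ)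
    (hBound : ∀ (L : ℕ) (dd : ℝ), Bound L dd = dL / N + (1 / B) *
      (13 * dd * dL * γ ^ 2 / 256 +
        (α * γ * w / 4) * (dd ^ 2 * dL + dd ^ 2 * d0 + ((L : ℝ) - 3) * dd ^ 3)))
    (em1 em2 emLm1 emL Δ : ℝ)
    (hem1 : em1 = (γ * w / 4) * d0 * ds ^ 2)
    (hem2 : em2 = (γ * w / 4) * ds ^ 3)
    (hemLm1 : emLm1 = (γ * w / 4) * ds ^ 2 * dL)
    (hemL : emL = 13 * ds * dL * γ ^ 2 / 256)
    (hΔ : Δ = δst * (1 + δst) ^ 2 * ((em1 + emLm1) / em2 + emL / (α * em2)))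
    (h2 : (Lt : ℝ) ≤ (Ls : ℝ) + 3 * δst * ((Ls : ℝ) - 3) + Δ) :
    Bound Lt dt ≤ Bound Ls ds := by
  have hLs3 : (3 : ℝ) ≤ Ls := by exact_mod_cast hLs
  have hΔ_eq : Δ = δst * (1 + δst) ^ 2 *
      (13 * dL * γ ^ 2 / 256 * ds + α * γ * w / 4 * (dL + d0) * ds ^ 2) /
      (α * γ * w / 4 * ds ^ 3) := by
    rw [hΔ, hem1, hem2, hemLm1, hemL]
    field_simp
    ring
  have key := add_sq_add_cube_div_one_add_le (13 * dL * γ ^ 2 / 256)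
    (α * γ * w / 4 * (dL + d0)) (α * γ * w / 4) δst (Ls - 3) (Lt - 3) ds
    (by positivity) (by positivity) hδst.le (by linarith) hds (by rw [← hΔ_eq]; linarith)
  rw [hBound, hBound, hdt]
  gcongr dL / N + 1 / B * ?_
  linear_combination key

/-- **Taller versus shorter pretrained networks (Corollary 14).**
With `Bound(L, d) = d_L/N + (1/B)[13 d d_L γ²/256 + (αγw/4)(d² d_L + d² d_0 + (L−3)d³)]`,
if `L_s < L_t ≤ L_s + 3 δ_st (L_s − 3) + Δ` where the taller network has hidden
width `d_t = d_s/(1+δ_st)`, then `Bound(L_t, d_t) ≤ Bound(L_s, d_s)`. -/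
theorem taller_vs_shorter_pretrained
    (d0 dL γ w α N B : ℝ)
    (hd0 : 0 < d0) (hdL : 0 < dL) (hγ : 0 < γ) (hw : 0 < w) (hα : 0 < α)
    (hN : 0 < N) (hB : 0 < B)
    (Ls Lt : ℕ) (hLs : 3 ≤ Ls)
    (δst : ℝ) (hδst : 0 < δst)
    (ds dt : ℝ) (hds : 0 < ds) (hdt : dt = ds / (1 + δst))
    (Bound : ℕ → ℝ → ℝ)
    (hBound : ∀ (L : ℕ) (dd : ℝ), Bound L dd = dL / N + (1 / B) *
      (13 * dd * dL * γ ^ 2 / 256 +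
        (α * γ * w / 4) * (dd ^ 2 * dL + dd ^ 2 * d0 + ((L : ℝ) - 3) * dd ^ 3)))
    (em1 em2 emLm1 emL Δ : ℝ)
    (hem1 : em1 = (γ * w / 4) * d0 * ds ^ 2)
    (hem2 : em2 = (γ * w / 4) * ds ^ 3)
    (hemLm1 : emLm1 = (γ * w / 4) * ds ^ 2 * dL)
    (hemL : emL = 13 * ds * dL * γ ^ 2 / 256)
    (hΔ : Δ = δst * (1 + δst) ^ 2 * ((em1 + emLm1) / em2 + emL / (α * em2)))
    (h1 : Ls < Lt)
    (h2 : (Lt : ℝ) ≤ (Ls : ℝ) + 3 * δst * ((Ls : ℝ) - 3) + Δ) :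
    Bound Lt dt ≤ Bound Ls ds :=
  taller_vs_shorter_pretrained_general d0 dL γ w α N B hd0 hdL hγ hw hα hB Ls Lt hLs δst hδst ds dt
    hds hdt Bound hBound em1 em2 emLm1 emL Δ hem1 hem2 hemLm1 hemL hΔ h2
end

section
/- Taller versus shorter dropout networks (Corollary 20): Fix d_0, d_L, γ, w, α, N, B > 0, a dropout rate ζ ∈ (0,1], integers L_s, L_t with L_s ≥ 3, and δ_st > 0. Let the shorter network have constant hidden width d_s > 0 and the taller one d_t = d_s/(1+δ_st). Define Bound_ζ(L, d) = d_L/(N ζ²) + (1/B) [ 13 d d_L γ²/(256 ζ) + (α γ w/4) d² d_L + α ζ (γ w/4) ( d_0 d² + (L−3) d³ ) ]. Set e^m_1 = (γw/4) d_0 d_s², e^m_2 = (γw/4) d_s³, e^m_{L−1} = (γw/4) d_s² d_L, e^m_L = 13 d_s d_L γ²/256, and Δ = δ_st (1+δ_st)² ( e^m_1/e^m_2 + e^m_{L−1}/(ζ e^m_2) + e^m_L/(α ζ² e^m_2) ). If L_s < L_t and L_t ≤ L_s + 3 δ_st (L_s − 3) + Δ, then Bound_ζ(L_t, d_t) ≤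 Bound_ζ(L_s, d_s); i.e., the taller dropout network achieves an expected-gradient decay bound no worse than the shorter one. -/
set_option maxHeartbeats 1000000


/-- **Taller versus shorter dropout networks (Corollary 20).**
With `Bound_ζ(L, d) = d_L/(Nζ²) + (1/B)[13 d d_L γ²/(256ζ) + (αγw/4) d² d_L
+ αζ(γw/4)(d_0 d² + (L−3)d³)]`, if `L_s < L_t ≤ L_s + 3 δ_st (L_s − 3) + Δ`
where the taller dropout network has hidden width `d_t = d_s/(1+δ_st)`,
then `Bound_ζ(L_t, d_t) ≤ Bound_ζ(L_s, d_s)`. -/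
theorem taller_vs_shorter_dropout
    (d0 dL γ w α N B : ℝ)
    (hd0 : 0 < d0) (hdL : 0 < dL) (hγ : 0 < γ) (hw : 0 < w) (hα : 0 < α)
    (hN : 0 < N) (hB : 0 < B)
    (ζ : ℝ) (hζ : ζ ∈ Set.Ioc (0 : ℝ) 1)
    (Ls Lt : ℕ) (hLs : 3 ≤ Ls)
    (δst : ℝ) (hδst : 0 < δst)
    (ds dt : ℝ) (hds : 0 < ds) (hdt : dt = ds / (1 + δst))
    (Bound : ℕ → ℝ → ℝ)
    (hBound : ∀ (L : ℕ) (dd : ℝ), Bound L dd = dL / (N * ζ ^ 2) + (1 / B) *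
      (13 * dd * dL * γ ^ 2 / (256 * ζ) + (α * γ * w / 4) * dd ^ 2 * dL +
        α * ζ * (γ * w / 4) * (d0 * dd ^ 2 + ((L : ℝ) - 3) * dd ^ 3)))
    (em1 em2 emLm1 emL Δ : ℝ)
    (hem1 : em1 = (γ * w / 4) * d0 * ds ^ 2)
    (hem2 : em2 = (γ * w / 4) * ds ^ 3)
    (hemLm1 : emLm1 = (γ * w / 4) * ds ^ 2 * dL)
    (hemL : emL = 13 * ds * dL * γ ^ 2 / 256)
    (hΔ : Δ = δst * (1 + δst) ^ 2 *
      (em1 / em2 + emLm1 / (ζ * em2) + emL / (α * ζ ^ 2 * em2)))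
    (h1 : Ls < Lt)
    (h2 : (Lt : ℝ) ≤ (Ls : ℝ) + 3 * δst * ((Ls : ℝ) - 3) + Δ) :
    Bound Lt dt ≤ Bound Ls ds := by
  obtain ⟨hζ0, hζ1⟩ := hζ
  have hu0 : (0:ℝ) < 1 + δst := by linarith
  have hc0 : (0:ℝ) < γ * w / 4 := by positivity
  have hΔ' : Δ = δst * (1 + δst) ^ 2 *
      (d0 / ds + dL / (ζ * ds) + 13 * dL * γ ^ 2 / (256 * α * ζ ^ 2 * (γ * w / 4) * ds ^ 2)) := by
    rw [hΔ, hem1, hem2, hemLm1, hemL]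
    have : (γ * w / 4) * ds ^ 3 ≠ 0 := by positivity
    field_simp
  have hΔ0 : 0 ≤ Δ := by rw [hΔ']; positivity
  have hLt4 : (4 : ℝ) ≤ (Lt : ℝ) := by exact_mod_cast (by omega : 4 ≤ Lt)
  have hLs3 : (3 : ℝ) ≤ (Ls : ℝ) := by exact_mod_cast hLs
  have hdt3 : dt ^ 3 = ds ^ 3 / (1 + δst) ^ 3 := by rw [hdt, div_pow]
  have hstep : ((Lt:ℝ) - 3) ≤ ((Ls:ℝ) - 3) * (1 + 3*δst) + Δ := by
    have h : ((Ls:ℝ)-3) * (1+3*δst) = (Ls:ℝ) - 3 + 3*δst*((Ls:ℝ)-3) := by ring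
    linarith
  have hu3 : (1 + 3*δst) ≤ (1 + δst) ^ 3 := by nlinarith [sq_nonneg δst, hδst.le]
  -- key inequality for the (L-3) d^3 term
  have K : α*ζ*(γ*w/4)*((Lt:ℝ)-3)*dt^3 ≤ α*ζ*(γ*w/4)*((Ls:ℝ)-3)*ds^3 +
      (δst/(1+δst))*(α*ζ*(γ*w/4)*d0*ds^2 + α*(γ*w/4)*dL*ds^2 + 13*dL*γ^2*ds/(256*ζ)) := by
    have h3 : α*ζ*(γ*w/4)*((Lt:ℝ)-3)*dt^3 ≤
        α*ζ*(γ*w/4)*(((Ls:ℝ)-3)*(1+3*δst)+Δ)*(ds^3/(1+δst)^3) := by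
      rw [hdt3]
      have hp : (0:ℝ) < α*ζ*(γ*w/4)*(ds^3/(1+δst)^3) := by positivity
      nlinarith [mul_le_mul_of_nonneg_right hstep hp.le]
    have h4 : α*ζ*(γ*w/4)*(((Ls:ℝ)-3)*(1+3*δst))*(ds^3/(1+δst)^3) ≤
        α*ζ*(γ*w/4)*((Ls:ℝ)-3)*ds^3 := by
      have hq : (0:ℝ) ≤ α*ζ*(γ*w/4)*((Ls:ℝ)-3)*(ds^3/(1+δst)^3) := by
        have : (0:ℝ) ≤ (Ls:ℝ)-3 := by linarith
        positivity
      have := mul_le_mul_of_nonneg_left hu3 hq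
      have hne : (1+δst)^3 ≠ 0 := by positivity
      calc α*ζ*(γ*w/4)*(((Ls:ℝ)-3)*(1+3*δst))*(ds^3/(1+δst)^3)
          = (α*ζ*(γ*w/4)*((Ls:ℝ)-3)*(ds^3/(1+δst)^3)) * (1+3*δst) := by ring
        _ ≤ (α*ζ*(γ*w/4)*((Ls:ℝ)-3)*(ds^3/(1+δst)^3)) * (1+δst)^3 := this
        _ = α*ζ*(γ*w/4)*((Ls:ℝ)-3)*ds^3 := by field_simp
    have h5 : α*ζ*(γ*w/4)*Δ*(ds^3/(1+δst)^3) =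
        (δst/(1+δst))*(α*ζ*(γ*w/4)*d0*ds^2 + α*(γ*w/4)*dL*ds^2 + 13*dL*γ^2*ds/(256*ζ)) := by
      rw [hΔ']
      field_simp
    nlinarith [h3, h4, h5]
  rw [hBound, hBound]
  apply add_le_add_right
  apply mul_le_mul_of_nonneg_left _ (by positivity : (0:ℝ) ≤ 1/B)
  have e1 : 13*dt*dL*γ^2/(256*ζ) + (δst/(1+δst))*(13*dL*γ^2*ds/(256*ζ)) = 13*ds*dL*γ^2/(256*ζ) := by
    rw [hdt]; field_simp
  have e2 : dt^2 + (δst/(1+δst))*ds^2 ≤ ds^2 := by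
    rw [hdt, div_pow]
    have hp : (0:ℝ) < (1+δst)^2 := by positivity
    have heq : ds^2/(1+δst)^2 + δst/(1+δst)*ds^2 = (ds^2 + δst*(1+δst)*ds^2)/(1+δst)^2 := by
      field_simp
    rw [heq, div_le_iff₀ hp]
    nlinarith [mul_pos (mul_pos hδst hδst) (mul_pos hds hds)]
  have e2a := mul_le_mul_of_nonneg_left e2 (by positivity : (0:ℝ) ≤ α*(γ*w/4)*dL)
  have e2b := mul_le_mul_of_nonneg_left e2 (by positivity : (0:ℝ) ≤ α*ζ*(γ*w/4)*d0)
  linarith [K, e1, e2a, e2b]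
end
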